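/- arXiv:2506.15327 — 3 statements merged into one kernel-verified Lean document; each statement's English description precedes it below -/
import Mathlib

section
/- The formula [α, g] · h = [α, g h] gives a well-defined right action of the group G on the quotient set Ω; this action preserves each fibre π⁻¹(x) of π : Ω → M, and on each fibre it is both free (if [α, g] · h = [α, g] then h = e) and transitive (for any two elements of the same fibre π⁻¹(x) there is an h ∈ G carrying one to the other); that is, each nonempty fibre of π is a G-torsor. -/
/-
The vertex group acts on `S × G` through the first factor and by left multiplication on `G`,
so right multiplication on `G` commutes with it and descends to `Ω`, where it visibly fixes
the target of `α`. Two classes `[α, g]`, `[α', g']` over the same object are related by the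
loop `γ₀ = α' ∘ α⁻¹`, which moves `α` to `α'`; adjusting `g` by `h` then gives transitivity.
Freeness holds because the only loop with `α ∘ γ₀ = α` is the identity (morphisms of a
groupoid cancel) and `W₀` sends the identity to `1`.
-/

open CategoryTheory

universe u v w

/-- `S × G`: pairs of a morphism with source `x₀` and an element of `G`. -/
abbrev SG {M : Type u} [Groupoid.{v} M] (x₀ : M) (G : Type w) : Type _ :=
  (Σ x : M, (x₀ ⟶ x)) × G

/-- The right action `(α, g) · γ₀ = (α ∘ γ₀, W₀ (γ₀⁻¹) * g)`.  Here `α ∘ γ₀ = γ₀ ≫ α`. -/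
def vertexAct {M : Type u} [Groupoid.{v} M] {G : Type w} [Group G] {x₀ : M}
    (W₀ : (x₀ ⟶ x₀) → G) (p : SG x₀ G) (γ₀ : x₀ ⟶ x₀) : SG x₀ G :=
  (⟨p.1.1, γ₀ ≫ p.1.2⟩, W₀ (Groupoid.inv γ₀) * p.2)

/-- The orbit relation of the right action of the vertex group on `S × G`. -/
def OmegaRel {M : Type u} [Groupoid.{v} M] {G : Type w} [Group G] {x₀ : M}
    (W₀ : (x₀ ⟶ x₀) → G) (p q : SG x₀ G) : Prop :=
  ∃ γ₀ : x₀ ⟶ x₀, q = vertexAct W₀ p γ₀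

/-- The quotient `Ω = (S × G) / P(x₀)`. -/
def Omega {M : Type u} [Groupoid.{v} M] {G : Type w} [Group G] {x₀ : M}
    (W₀ : (x₀ ⟶ x₀) → G) : Type _ :=
  Quot (OmegaRel W₀)

/-- The class `[α, g]` of `(α, g)` in `Ω`. -/
def Omega.mk {M : Type u} [Groupoid.{v} M] {G : Type w} [Group G] {x₀ : M}
    (W₀ : (x₀ ⟶ x₀) → G) (p : SG x₀ G) : Omega W₀ :=
  Quot.mk (OmegaRel W₀) p

/-- The projection `π : Ω → M`, `π [α, g] = target α`; it is well defined since the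
target is invariant under the action. -/
def proj {M : Type u} [Groupoid.{v} M] {G : Type w} [Group G] {x₀ : M}
    (W₀ : (x₀ ⟶ x₀) → G) : Omega W₀ → M :=
  Quot.lift (fun p => p.1.1) (by rintro p q ⟨γ₀, rfl⟩; rfl)

/-- The right `G`-action on `Ω`: `[α, g] · h = [α, g * h]`.  It is well defined on
equivalence classes. -/
def actG {M : Type u} [Groupoid.{v} M] {G : Type w} [Group G] {x₀ : M}
    (W₀ : (x₀ ⟶ x₀) → G) (ω : Omega W₀) (h : G) : Omega W₀ :=
  Quot.lift (fun p => Quot.mk (OmegaRel W₀) (p.1, p.2 * h))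
    (by
      rintro p q ⟨γ₀, rfl⟩
      exact Quot.sound ⟨γ₀, by simp [vertexAct, mul_assoc]⟩) ω


section

variable {M : Type u} [Groupoid.{v} M] {G : Type w} [Group G] {x₀ : M}
  {W₀ : (x₀ ⟶ x₀) → G}

lemma map_id_of_map_comp (hW₀ : ∀ γ δ : x₀ ⟶ x₀, W₀ (δ ≫ γ) = W₀ γ * W₀ δ) :
    W₀ (𝟙 x₀) = 1 := by
  simpa using hW₀ (𝟙 x₀) (𝟙 x₀)

lemma vertexAct_id (hW₀ : ∀ γ δ : x₀ ⟶ x₀, W₀ (δ ≫ γ) = W₀ γ * W₀ δ) (p : SG x₀ G) :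
    vertexAct W₀ p (𝟙 x₀) = p := by
  simp [vertexAct, Groupoid.inv_eq_inv, map_id_of_map_comp hW₀]

lemma vertexAct_vertexAct (hW₀ : ∀ γ δ : x₀ ⟶ x₀, W₀ (δ ≫ γ) = W₀ γ * W₀ δ)
    (p : SG x₀ G) (γ δ : x₀ ⟶ x₀) :
    vertexAct W₀ (vertexAct W₀ p γ) δ = vertexAct W₀ p (δ ≫ γ) := by
  simp [vertexAct, Groupoid.inv_eq_inv, hW₀, mul_assoc]

lemma omegaRel_equivalence (hW₀ : ∀ γ δ : x₀ ⟶ x₀, W₀ (δ ≫ γ) = W₀ γ * W₀ δ) :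
    Equivalence (OmegaRel W₀) where
  refl p := ⟨𝟙 x₀, (vertexAct_id hW₀ p).symm⟩
  symm := by
    rintro p _ ⟨γ, rfl⟩
    exact ⟨Groupoid.inv γ, by rw [vertexAct_vertexAct hW₀, Groupoid.inv_comp, vertexAct_id hW₀]⟩
  trans := by
    rintro p _ _ ⟨γ, rfl⟩ ⟨δ, rfl⟩
    exact ⟨δ ≫ γ, vertexAct_vertexAct hW₀ p γ δ⟩

lemma Omega.mk_eq_mk_iff (hW₀ : ∀ γ δ : x₀ ⟶ x₀, W₀ (δ ≫ γ) = W₀ γ * W₀ δ)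
    {p q : SG x₀ G} : Omega.mk W₀ p = Omega.mk W₀ q ↔ OmegaRel W₀ p q :=
  Quot.eq.trans (omegaRel_equivalence hW₀).eqvGen_iff

lemma actG_mk (p : SG x₀ G) (h : G) :
    actG W₀ (Omega.mk W₀ p) h = Omega.mk W₀ (p.1, p.2 * h) :=
  rfl

lemma actG_one (ω : Omega W₀) : actG W₀ ω 1 = ω :=
  Quot.inductionOn ω fun p => congrArg (Omega.mk W₀) (by simp)

lemma actG_actG (ω : Omega W₀) (h h' : G) : actG W₀ (actG W₀ ω h) h' = actG W₀ ω (h * h') :=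
  Quot.inductionOn ω fun p => congrArg (Omega.mk W₀) (by simp [mul_assoc])

lemma proj_actG (ω : Omega W₀) (h : G) : proj W₀ (actG W₀ ω h) = proj W₀ ω :=
  Quot.inductionOn ω fun _ => rfl

lemma eq_one_of_actG_eq_self (hW₀ : ∀ γ δ : x₀ ⟶ x₀, W₀ (δ ≫ γ) = W₀ γ * W₀ δ)
    (ω : Omega W₀) (h : G) (hfix : actG W₀ ω h = ω) : h = 1 := by
  obtain ⟨⟨⟨x, α⟩, g⟩⟩ := ω
  obtain ⟨γ, hγ⟩ := (Omega.mk_eq_mk_iff hW₀).mp hfix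
  simp only [vertexAct, Prod.mk.injEq, Sigma.mk.injEq, heq_eq_eq, true_and] at hγ
  obtain ⟨hα, hg⟩ := hγ
  rw [eq_comm, cancel_mono_id] at hα
  rwa [hα, Groupoid.inv_eq_inv, IsIso.inv_id, map_id_of_map_comp hW₀, one_mul,
    left_eq_mul] at hg

lemma exists_actG_eq_of_proj_eq (ω ω' : Omega W₀) (hω : proj W₀ ω = proj W₀ ω') :
    ∃ h : G, actG W₀ ω h = ω' := by
  obtain ⟨⟨⟨x, α⟩, g⟩⟩ := ω
  obtain ⟨⟨⟨x', α'⟩, g'⟩⟩ := ω'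
  obtain rfl : x = x' := hω
  let γ : x₀ ⟶ x₀ := α' ≫ Groupoid.inv α
  refine ⟨g⁻¹ * (W₀ (Groupoid.inv γ))⁻¹ * g', Quot.sound ⟨γ, ?_⟩⟩
  simp [vertexAct, γ, Groupoid.inv_eq_inv, mul_assoc]

end

theorem statement2 {M : Type u} [Groupoid.{v} M] {G : Type w} [Group G] (x₀ : M)
    (W₀ : (x₀ ⟶ x₀) → G)
    (hW₀ : ∀ γ δ : x₀ ⟶ x₀, W₀ (δ ≫ γ) = W₀ γ * W₀ δ) :
    (∀ (p : SG x₀ G) (h : G), actG W₀ (Omega.mk W₀ p) h = Omega.mk W₀ (p.1, p.2 * h)) ∧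
    (∀ ω : Omega W₀, actG W₀ ω 1 = ω) ∧
    (∀ (ω : Omega W₀) (h h' : G), actG W₀ (actG W₀ ω h) h' = actG W₀ ω (h * h')) ∧
    (∀ (ω : Omega W₀) (h : G), proj W₀ (actG W₀ ω h) = proj W₀ ω) ∧
    (∀ (ω : Omega W₀) (h : G), actG W₀ ω h = ω → h = 1) ∧
    (∀ ω ω' : Omega W₀, proj W₀ ω = proj W₀ ω' → ∃ h : G, actG W₀ ω h = ω') :=
  ⟨actG_mk, actG_one, actG_actG, proj_actG, eq_one_of_actG_eq_self hW₀,
    exists_actG_eq_of_proj_eq⟩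
end

section
/- (Reconstruction theorem, existence part.) Let P be a connected groupoid with object type M (for any two objects there is a morphism between them), x₀ an object of P, G a group, and W₀ : P(x₀) → G a group homomorphism from the vertex group of P at x₀. Then there exist: a set Ω; a surjection π : Ω → M; a right action of G on Ω preserving the fibres of π which is free and transitive on each fibre; a bijection j : G → π⁻¹(x₀); and, for each morphism β : y ⟶ z of P, a G-equivariant bijection W(β) : π⁻¹(y) → π⁻¹(z), such that W(β₂ ∘ β₁) = W(β₂) ∘ W(β₁) for all composable β₁, β₂, W(1_y) = id for every object y, and j⁻¹(W(β₀)(j(g))) = W₀(β₀) · g for all β₀ ∈ P(x₀) and g ∈ G. -/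
/-!
Take `Ω = M × G` with `G` acting by right multiplication on the second factor. Choose arrows
`τ x : x₀ ⟶ x` with `τ x₀ = 𝟙 x₀` (possible by connectedness); then
`β ↦ W₀ (τ y ≫ β ≫ (τ z)⁻¹)` is a functor from `P` to `G` that restricts to `W₀` on the vertex
group, and `W β` multiplies the fibre coordinate on the left by its value. Left and right
multiplications commute, which is the equivariance.
-/

open CategoryTheory

universe u v w

namespace CategoryTheory.Groupoid

variable {M : Type u} [Groupoid.{v} M]

theorem exists_homs_from_eq_id (x₀ : M) (hconn : ∀ x, Nonempty (x₀ ⟶ x)) :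
    ∃ τ : ∀ x, x₀ ⟶ x, τ x₀ = 𝟙 x₀ :=
  ⟨fun x => inv (hconn x₀).some ≫ (hconn x).some, inv_comp _⟩

variable {G : Type w} [Group G]

/-- `SingleObj G` composes as `f ≫ g = g * f`, the convention of `hW₀`. -/
def extendVertexHom {x₀ : M} (W₀ : (x₀ ⟶ x₀) → G)
    (hW₀ : ∀ γ δ : x₀ ⟶ x₀, W₀ (δ ≫ γ) = W₀ γ * W₀ δ) (τ : ∀ x, x₀ ⟶ x) :
    M ⥤ SingleObj G where
  obj _ := SingleObj.star G
  map {y z} β := W₀ (τ y ≫ β ≫ inv (τ z))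
  map_id y := by
    have hW₀_id := hW₀ (𝟙 x₀) (𝟙 x₀)
    rw [Category.comp_id, left_eq_mul] at hW₀_id
    rwa [Category.id_comp, comp_inv, SingleObj.id_as_one]
  map_comp {y z w} β₁ β₂ := by
    rw [SingleObj.comp_as_mul, ← hW₀]
    simp only [Category.assoc, inv_eq_inv, IsIso.inv_hom_id_assoc]

theorem extendVertexHom_map_vertex {x₀ : M} (W₀ : (x₀ ⟶ x₀) → G)
    (hW₀ : ∀ γ δ : x₀ ⟶ x₀, W₀ (δ ≫ γ) = W₀ γ * W₀ δ) {τ : ∀ x, x₀ ⟶ x} (hτ : τ x₀ = 𝟙 x₀)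
    (β₀ : x₀ ⟶ x₀) : (extendVertexHom W₀ hW₀ τ).map β₀ = W₀ β₀ := by
  simp [extendVertexHom, hτ]

end CategoryTheory.Groupoid

section TrivialBundle

universe t

variable {M : Type u} {G : Type w} {α : Type*}

def fiberPoint (x : M) (g : G) : {p : ULift.{t} M × G // p.1.down = x} := ⟨(⟨x⟩, g), rfl⟩

theorem fiberPoint_bijective (x : M) :
    Function.Bijective (fiberPoint x : G → {p : ULift.{t} M × G // p.1.down = x}) := by
  refine ⟨fun g g' h => congrArg (fun p => p.1.2) h, fun ⟨⟨⟨y⟩, g⟩, hy⟩ => ⟨g, ?_⟩⟩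
  cases hy
  rfl

variable [Group G]

def mulRightSnd (p : α × G) (h : G) : α × G := (p.1, p.2 * h)

@[simp] theorem mulRightSnd_one (p : α × G) : mulRightSnd p 1 = p := by
  simp [mulRightSnd]

theorem mulRightSnd_mulRightSnd (p : α × G) (h h' : G) :
    mulRightSnd (mulRightSnd p h) h' = mulRightSnd p (h * h') := by
  simp [mulRightSnd, mul_assoc]

theorem eq_one_of_mulRightSnd_eq_self {p : α × G} {h : G}
    (hp : mulRightSnd p h = p) : h = 1 := by
  simpa [mulRightSnd] using congrArg Prod.snd hp

theorem exists_mulRightSnd_eq_of_fst_eq {p p' : α × G} (hp : p.1 = p'.1) :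
    ∃ h, mulRightSnd p h = p' :=
  ⟨p.2⁻¹ * p'.2, Prod.ext hp (by simp [mulRightSnd])⟩

def fiberMulLeft (y z : M) (g : G) (p : {p : ULift.{t} M × G // p.1.down = y}) :
    {p : ULift.{t} M × G // p.1.down = z} :=
  fiberPoint z (g * p.1.2)

@[simp] theorem fiberMulLeft_fiberPoint (y z : M) (g h : G) :
    fiberMulLeft y z g (fiberPoint y h : {p : ULift.{t} M × G // p.1.down = y}) =
      fiberPoint z (g * h) :=
  rfl

theorem fiberMulLeft_fiberMulLeft (y z w : M) (g h : G)
    (p : {p : ULift.{t} M × G // p.1.down = y}) :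
    fiberMulLeft z w h (fiberMulLeft y z g p) = fiberMulLeft y w (h * g) p := by
  simp [fiberMulLeft, fiberPoint, mul_assoc]

theorem fiberMulLeft_one (y : M) :
    (fiberMulLeft y y 1 : {p : ULift.{t} M × G // p.1.down = y} → _) = id := by
  funext ⟨⟨⟨x⟩, g⟩, hx⟩
  cases hx
  simp [fiberMulLeft, fiberPoint]

theorem fiberMulLeft_bijective (y z : M) (g : G) :
    Function.Bijective (fiberMulLeft y z g : {p : ULift.{t} M × G // p.1.down = y} → _) := by
  refine Function.bijective_iff_has_inverse.mpr ⟨fiberMulLeft z y g⁻¹, ?_, ?_⟩ <;> intro p <;>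
    simp [fiberMulLeft_fiberMulLeft, fiberMulLeft_one]

theorem fiberMulLeft_mulRightSnd {y z : M} (g h : G)
    {p p' : {p : ULift.{t} M × G // p.1.down = y}} (hp : p'.1 = mulRightSnd p.1 h) :
    (fiberMulLeft y z g p').1 = mulRightSnd (fiberMulLeft y z g p).1 h := by
  simp [fiberMulLeft, fiberPoint, mulRightSnd, hp, mul_assoc]

end TrivialBundle

theorem statement7 {M : Type u} [Groupoid.{v} M] (x₀ : M)
    (hconn : ∀ x y : M, Nonempty (x ⟶ y))
    {G : Type w} [Group G] (W₀ : (x₀ ⟶ x₀) → G)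
    (hW₀ : ∀ γ δ : x₀ ⟶ x₀, W₀ (δ ≫ γ) = W₀ γ * W₀ δ) :
    ∃ (Ω : Type (max u v w)) (π : Ω → M) (actG : Ω → G → Ω),
      Function.Surjective π ∧
      (∀ ω : Ω, actG ω 1 = ω) ∧
      (∀ (ω : Ω) (h h' : G), actG (actG ω h) h' = actG ω (h * h')) ∧
      (∀ (ω : Ω) (h : G), π (actG ω h) = π ω) ∧
      (∀ (ω : Ω) (h : G), actG ω h = ω → h = 1) ∧
      (∀ ω ω' : Ω, π ω = π ω' → ∃ h : G, actG ω h = ω') ∧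
      ∃ (j : G → {ω : Ω // π ω = x₀})
        (W : ∀ (y z : M), (y ⟶ z) → {ω : Ω // π ω = y} → {ω : Ω // π ω = z}),
        Function.Bijective j ∧
        (∀ (y z : M) (β : y ⟶ z), Function.Bijective (W y z β)) ∧
        (∀ (y z : M) (β : y ⟶ z) (ω ω' : {ω : Ω // π ω = y}) (h : G),
          ω'.1 = actG ω.1 h → (W y z β ω').1 = actG (W y z β ω).1 h) ∧
        (∀ (y z w : M) (β₁ : y ⟶ z) (β₂ : z ⟶ w),
          W y w (β₁ ≫ β₂) = fun ω => W z w β₂ (W y z β₁ ω)) ∧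
        (∀ y : M, W y y (𝟙 y) = id) ∧
        (∀ (β₀ : x₀ ⟶ x₀) (g : G), W x₀ x₀ β₀ (j g) = j (W₀ β₀ * g)) := by
  obtain ⟨τ, hτ⟩ := Groupoid.exists_homs_from_eq_id x₀ (hconn x₀)
  let F := Groupoid.extendVertexHom W₀ hW₀ τ
  refine ⟨ULift.{max v w} M × G, fun p => p.1.down, mulRightSnd, fun x => ⟨(⟨x⟩, 1), rfl⟩,
    mulRightSnd_one, mulRightSnd_mulRightSnd, fun _ _ => rfl,
    fun _ _ => eq_one_of_mulRightSnd_eq_self,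
    fun _ _ h => exists_mulRightSnd_eq_of_fst_eq (ULift.ext _ _ h),
    fiberPoint x₀, fun y z β => fiberMulLeft y z (F.map β), fiberPoint_bijective x₀,
    fun y z _ => fiberMulLeft_bijective y z _, fun _ _ _ _ _ h => fiberMulLeft_mulRightSnd _ h,
    fun _ _ _ β₁ β₂ => ?_, fun _ => ?_, fun β₀ g => ?_⟩
  · funext p
    beta_reduce
    rw [F.map_comp, SingleObj.comp_as_mul, fiberMulLeft_fiberMulLeft]
  · beta_reduce
    rw [F.map_id, SingleObj.id_as_one, fiberMulLeft_one]
  · beta_reduce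
    rw [fiberMulLeft_fiberPoint, Groupoid.extendVertexHom_map_vertex W₀ hW₀ hτ]
end

section
/- Let Γ be a groupoid, X a type, A, B ⊆ X subsets with A ∩ B nonempty. Let F, F' : Pair(A) ⥤ Γ and H, H' : Pair(B) ⥤ Γ be functors such that F agrees with H, and F' agrees with H', after composition with the inclusion functors from Pair(A ∩ B), and let K = glue(F, H) and K' = glue(F', H') be the glued functors on Pair(A ∪ B). Let ν : F ⇒ F' and ν' : H ⇒ H' be natural transformations with ν(x) = ν'(x) for all x ∈ A ∩ B. Then the family assigning ν(a) to each a ∈ A and ν'(b) to each b ∈ B is well defined and is a natural transformation ν ⊔ ν' : K ⇒ K'. -/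
/-!
On a pair groupoid every object is joined to a fixed object `z` by a unique morphism, so a natural
transformation `K ⟶ K'` is determined by its component at `z`, and every morphism
`K z ⟶ K' z` is the component of one (conjugate it by `K (x ⟶ z)` and `K' (z ⟶ x)`).
Extending the component of `ν` at a point `z ∈ A ∩ B` gives `τ : K ⟶ K'`; its restrictions to `A`
and to `B` agree with `ν` and `ν'` at `z`, hence everywhere.
-/

open CategoryTheory

universe u v w

/-- The pair (codiscrete) groupoid on a type `A`: objects are the elements of `A`
and there is exactly one morphism `a ⟶ b` for every ordered pair `(a, b)`. -/
def PairGpd (A : Type u) : Type u := A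

instance pairGroupoid (A : Type u) : Groupoid (PairGpd A) where
  Hom _ _ := PUnit
  id _ := PUnit.unit
  comp _ _ := PUnit.unit
  id_comp _ := rfl
  comp_id _ := rfl
  assoc _ _ _ := rfl
  inv _ := PUnit.unit
  inv_comp _ := rfl
  comp_inv _ := rfl

/-- The unique morphism `a ⟶ b` of the pair groupoid. -/
def pairHom {A : Type u} (a b : PairGpd A) : a ⟶ b := PUnit.unit

/-- The inclusion functor `Pair(S) ⥤ Pair(T)` induced by an inclusion of subsets
`S ⊆ T` of a type `X`. -/
def pairIncl {X : Type u} {S T : Set X} (h : S ⊆ T) : PairGpd ↥S ⥤ PairGpd ↥T where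
  obj a := (Set.inclusion h a : PairGpd ↥T)
  map _ := PUnit.unit
  map_id _ := rfl
  map_comp _ _ := rfl

namespace PairGpd

variable {C : Type*} [Category C] {S : Type*} {K K' : PairGpd S ⥤ C}

theorem natTrans_app_eq (τ : K ⟶ K') (x z : PairGpd S) :
    τ.app x = K.map (pairHom x z) ≫ τ.app z ≫ K'.map (pairHom z x) := by
  rw [τ.naturality_assoc, ← K'.map_comp]
  change τ.app x = τ.app x ≫ K'.map (𝟙 x)
  simp

theorem natTrans_ext {τ τ' : K ⟶ K'} (z : PairGpd S) (h : τ.app z = τ'.app z) : τ = τ' := by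
  ext x
  rw [natTrans_app_eq τ x z, natTrans_app_eq τ' x z, h]

def natTransOfApp (z : PairGpd S) (t : K.obj z ⟶ K'.obj z) : K ⟶ K' where
  app x := K.map (pairHom x z) ≫ t ≫ K'.map (pairHom z x)
  naturality x y _ := by
    rw [← K.map_comp_assoc, Category.assoc, Category.assoc, ← K'.map_comp]
    rfl

@[simp]
theorem natTransOfApp_app_self (z : PairGpd S) (t : K.obj z ⟶ K'.obj z) :
    (natTransOfApp z t).app z = t := by
  change K.map (𝟙 z) ≫ t ≫ K'.map (𝟙 z) = t
  simp

theorem exists_natTrans_whiskerLeft_pairIncl_eq {X : Type*} {S T U : Set X}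
    (hS : S ⊆ U) (hT : T ⊆ U) {K K' : PairGpd U ⥤ C}
    (σ : pairIncl hS ⋙ K ⟶ pairIncl hS ⋙ K') (σ' : pairIncl hT ⋙ K ⟶ pairIncl hT ⋙ K')
    (z : ↥(S ∩ T))
    (h : σ.app (Set.inclusion Set.inter_subset_left z)
      = σ'.app (Set.inclusion Set.inter_subset_right z)) :
    ∃ τ : K ⟶ K', Functor.whiskerLeft (pairIncl hS) τ = σ ∧
      Functor.whiskerLeft (pairIncl hT) τ = σ' :=
  ⟨natTransOfApp _ (σ.app (Set.inclusion Set.inter_subset_left z)),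
    natTrans_ext _ (natTransOfApp_app_self _ _),
    natTrans_ext (Set.inclusion Set.inter_subset_right z) ((natTransOfApp_app_self _ _).trans h)⟩

end PairGpd

theorem statement16 {X : Type u} {Γ : Type v} [Groupoid.{w} Γ] (A B : Set X)
    (hAB : (A ∩ B).Nonempty)
    (F F' : PairGpd ↥A ⥤ Γ) (H H' : PairGpd ↥B ⥤ Γ)
    (hFH : pairIncl (Set.inter_subset_left (s := A) (t := B)) ⋙ F
      = pairIncl (Set.inter_subset_right (s := A) (t := B)) ⋙ H)
    (hFH' : pairIncl (Set.inter_subset_left (s := A) (t := B)) ⋙ F'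
      = pairIncl (Set.inter_subset_right (s := A) (t := B)) ⋙ H')
    (K K' : PairGpd ↥(A ∪ B) ⥤ Γ)
    (hK₁ : pairIncl (Set.subset_union_left (s := A) (t := B)) ⋙ K = F)
    (hK₂ : pairIncl (Set.subset_union_right (s := A) (t := B)) ⋙ K = H)
    (hK'₁ : pairIncl (Set.subset_union_left (s := A) (t := B)) ⋙ K' = F')
    (hK'₂ : pairIncl (Set.subset_union_right (s := A) (t := B)) ⋙ K' = H')
    (ν : F ⟶ F') (ν' : H ⟶ H')
    (hνν' : ∀ x : PairGpd ↥(A ∩ B),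
      ν.app ((pairIncl (Set.inter_subset_left (s := A) (t := B))).obj x)
          ≫ eqToHom (Functor.congr_obj hFH' x)
        = eqToHom (Functor.congr_obj hFH x)
          ≫ ν'.app ((pairIncl (Set.inter_subset_right (s := A) (t := B))).obj x)) :
    ∃ τ : K ⟶ K',
      (∀ a : PairGpd ↥A,
        τ.app ((pairIncl (Set.subset_union_left (s := A) (t := B))).obj a)
          = eqToHom (Functor.congr_obj hK₁ a) ≫ ν.app a
              ≫ eqToHom (Functor.congr_obj hK'₁ a).symm) ∧
      (∀ b : PairGpd ↥B,
        τ.app ((pairIncl (Set.subset_union_right (s := A) (t := B))).obj b)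
          = eqToHom (Functor.congr_obj hK₂ b) ≫ ν'.app b
              ≫ eqToHom (Functor.congr_obj hK'₂ b).symm) := by
  subst hK₁ hK₂ hK'₁ hK'₂
  -- Now `F, F', H, H'` are restrictions of `K, K'`, so the `eqToHom`s in `hνν'` are identities
  -- up to definitional unfolding.
  obtain ⟨z, hz⟩ := hAB
  obtain ⟨τ, hτA, hτB⟩ :=
    PairGpd.exists_natTrans_whiskerLeft_pairIncl_eq _ _ ν ν' ⟨z, hz⟩
      ((Category.comp_id _).symm.trans ((hνν' ⟨z, hz⟩).trans (Category.id_comp _)))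
  subst hτA hτB
  refine ⟨τ, fun a => ?_, fun b => ?_⟩ <;>
    simp only [eqToHom_refl, Category.id_comp, Category.comp_id] <;> rfl
end
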